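/- Let w be a word over Σ with ι(w) = k ≥ 1 such that every letter of Σ occurs exactly once in each arch of w and at most once in the remainder r(w). Then ζ(w^s) = s·k for all s ∈ ℕ. -/

import Mathlib

open List

variable {α : Type*}

/-- `w` is `k`-universal: every word of length `k` over the alphabet `α`
is a scattered factor (subsequence) of `w`. -/
def IsUniversal [Fintype α] (k : ℕ) (w : List α) : Prop :=
  ∀ u : List α, u.length = k → u.Sublist w

/-- The universality index `ι(w)`: the largest `k` such that `w` is `k`-universal. -/
noncomputable def univIndex [Fintype α] (w : List α) : ℕ :=
  sSup {k | IsUniversal k w}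

/-- The circular universality index `ζ(w)`: the largest `k` such that some
conjugate of `w` is `k`-universal. -/
noncomputable def circIndex [Fintype α] (w : List α) : ℕ :=
  sSup {k | ∃ u v : List α, w = u ++ v ∧ IsUniversal k (v ++ u)}

/-- `wpow w s = w^s`, the `s`-fold concatenation of `w`. -/
def wpow (w : List α) (s : ℕ) : List α := (List.replicate s w).flatten

/-- Auxiliary (fuelled) computation of the remainder of the arch factorisation:
greedily remove the shortest prefix containing every letter of the alphabet. -/
def remAux [Fintype α] [DecidableEq α] : ℕ → List α → List α
  | 0, w => w
  | (n+1), w =>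
    match (List.range' 1 w.length).find?
        (fun m => decide ((w.take m).toFinset = Finset.univ)) with
    | none => w
    | some m => remAux n (w.drop m)

/-- `rem w = r(w)`, the remainder of the arch factorisation of `w`. -/
def rem [Fintype α] [DecidableEq α] (w : List α) : List α := remAux w.length w

/-- Auxiliary (fuelled) computation of the list of arches of `w`. -/
def archesAux [Fintype α] [DecidableEq α] : ℕ → List α → List (List α)
  | 0, _ => []
  | (n+1), w =>
    match (List.range' 1 w.length).find?
        (fun m => decide ((w.take m).toFinset = Finset.univ)) with
    | none => []
    | some m => (w.take m) :: archesAux n (w.drop m)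

/-- `arches w`: the list `[arch₁(w), …, arch_{ι(w)}(w)]` of arches of `w`. -/
def arches [Fintype α] [DecidableEq α] (w : List α) : List (List α) :=
  archesAux w.length w


/-! Every arch contains every letter, so `w` is `|arches w|`-universal and `w^s` is
`s·|arches w|`-universal. Some letter `a` is missing from `r(w)`, otherwise `r(w)` would contain
a further arch; as `a` occurs exactly once per arch, it occurs `|arches w|` times in `w` and
`s·|arches w|` times in every conjugate of `w^s`. Since `aᵐ` is a scattered factor of a word only
when `m` is at most the number of occurrences of `a`, both indices are attained exactly. -/

namespace IsUniversal

variable [Fintype α]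

theorem of_isEmpty [IsEmpty α] (k : ℕ) (w : List α) : IsUniversal k w
  | [], _ => nil_sublist w
  | a :: _, _ => isEmptyElim a

theorem mono {k : ℕ} {v w : List α} (h : IsUniversal k v) (hvw : v <+ w) : IsUniversal k w :=
  fun u hu => (h u hu).trans hvw

theorem append {m n : ℕ} {v w : List α} (hv : IsUniversal m v) (hw : IsUniversal n w) :
    IsUniversal (m + n) (v ++ w) := by
  intro u hu
  rw [← take_append_drop m u]
  exact (hv _ (by simp; omega)).append (hw _ (by simp; omega))

theorem one_of_forall_mem {w : List α} (h : ∀ a, a ∈ w) : IsUniversal 1 w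
  | [a], _ => singleton_sublist.mpr (h a)

theorem flatten {L : List (List α)} (h : ∀ B ∈ L, ∀ a, a ∈ B) :
    IsUniversal L.length L.flatten := by
  induction L with
  | nil => intro u hu; simp_all
  | cons B L ih =>
    rw [flatten_cons, length_cons, Nat.add_comm]
    exact (one_of_forall_mem (h B mem_cons_self)).append
      (ih fun B' hB' => h B' (mem_cons_of_mem _ hB'))

theorem wpow {n : ℕ} {w : List α} (h : IsUniversal n w) (s : ℕ) :
    IsUniversal (s * n) (wpow w s) := by
  induction s with
  | zero => intro u hu; simp_all
  | succ s ih =>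
    rw [Nat.succ_mul, Nat.add_comm]
    exact h.append ih

theorem le_count [DecidableEq α] {k : ℕ} {w : List α} (h : IsUniversal k w) (a : α) :
    k ≤ w.count a :=
  replicate_sublist_iff.mp (h _ length_replicate)

end IsUniversal

section

variable [Fintype α]

theorem univIndex_of_isEmpty [IsEmpty α] (w : List α) : univIndex w = 0 :=
  Nat.sSup_of_not_bddAbove fun ⟨b, hb⟩ => b.not_succ_le_self (hb (IsUniversal.of_isEmpty _ w))

theorem circIndex_of_isEmpty [IsEmpty α] (w : List α) : circIndex w = 0 :=
  Nat.sSup_of_not_bddAbove fun ⟨b, hb⟩ =>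
    b.not_succ_le_self (hb ⟨[], w, rfl, IsUniversal.of_isEmpty _ _⟩)

variable [DecidableEq α]

theorem univIndex_eq_of_count_eq {n : ℕ} {w : List α} (h : IsUniversal n w) {a : α}
    (ha : w.count a = n) : univIndex w = n :=
  IsGreatest.csSup_eq ⟨h, fun _ hm => ha ▸ hm.le_count a⟩

theorem circIndex_eq_of_count_eq {n : ℕ} {w : List α} (h : IsUniversal n w) {a : α}
    (ha : w.count a = n) : circIndex w = n := by
  refine IsGreatest.csSup_eq ⟨⟨[], w, rfl, by rwa [append_nil]⟩, ?_⟩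
  rintro m ⟨u, v, rfl, hm⟩
  exact ha ▸ perm_append_comm.count_eq a ▸ hm.le_count a

end

theorem count_wpow [BEq α] (w : List α) (a : α) (s : ℕ) :
    (wpow w s).count a = s * w.count a := by
  simp [wpow, count_flatten]

section Arches

variable [Fintype α] [DecidableEq α]

theorem flatten_archesAux_append_remAux (n : ℕ) (w : List α) :
    (archesAux n w).flatten ++ remAux n w = w := by
  induction n generalizing w with
  | zero => rfl
  | succ n ih =>
    rw [archesAux, remAux]
    split
    · rfl
    · rw [flatten_cons, append_assoc, ih, take_append_drop]

theorem mem_of_mem_archesAux {n : ℕ} {w B : List α} (hB : B ∈ archesAux n w) (a : α) :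
    a ∈ B := by
  induction n generalizing w with
  | zero => simp [archesAux] at hB
  | succ n ih =>
    rw [archesAux] at hB
    split at hB
    · simp at hB
    · rename_i m hm
      rcases mem_cons.mp hB with rfl | hB
      · have hfull := find?_some hm
        simp only [decide_eq_true_eq, Finset.eq_univ_iff_forall, mem_toFinset] at hfull
        exact hfull a
      · exact ih hB

theorem exists_notMem_remAux [Nonempty α] {n : ℕ} {w : List α} (hw : w.length ≤ n) :
    ∃ a, a ∉ remAux n w := by
  induction n generalizing w with
  | zero => simp_all [remAux]
  | succ n ih =>
    rw [remAux]
    split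
    · rename_i hnone
      rcases eq_or_ne w [] with rfl | hne
      · simp
      · have hlen : w.length ∈ range' 1 w.length :=
          mem_range'_1.mpr ⟨length_pos_iff.mpr hne, by omega⟩
        simpa [Finset.eq_univ_iff_forall] using find?_eq_none.mp hnone _ hlen
    · rename_i m hm
      have hm_range := mem_range'_1.mp (mem_of_find?_eq_some hm)
      exact ih (by simp; omega)

theorem flatten_arches_append_rem (w : List α) : (arches w).flatten ++ rem w = w :=
  flatten_archesAux_append_remAux _ _

theorem exists_notMem_rem [Nonempty α] (w : List α) : ∃ a, a ∉ rem w :=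
  exists_notMem_remAux le_rfl

theorem isUniversal_length_arches (w : List α) : IsUniversal (arches w).length w := by
  have hsub : (arches w).flatten <+ w := by
    conv_rhs => rw [← flatten_arches_append_rem w]
    exact sublist_append_left _ _
  exact (IsUniversal.flatten fun _ hB => mem_of_mem_archesAux hB).mono hsub

theorem count_eq_length_arches {w : List α} {a : α} (harch : ∀ B ∈ arches w, B.count a = 1)
    (ha : a ∉ rem w) : w.count a = (arches w).length := by
  conv_lhs => rw [← flatten_arches_append_rem w]
  rw [count_append, count_eq_zero.mpr ha, count_flatten, map_congr_left harch]
  simp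

end Arches

theorem circIndex_pow_of_simple_arches_general [Fintype α] [DecidableEq α] (w : List α) (k : ℕ)
    (hk : univIndex w = k)
    (harch : ∀ B ∈ arches w, ∀ a : α, B.count a = 1) :
    ∀ s : ℕ, 1 ≤ s → circIndex (wpow w s) = s * k := by
  intro s _
  cases isEmpty_or_nonempty α
  · rw [circIndex_of_isEmpty, ← hk, univIndex_of_isEmpty, mul_zero]
  · obtain ⟨a, ha⟩ := exists_notMem_rem w
    have hcount := count_eq_length_arches (fun B hB => harch B hB a) ha
    obtain rfl : (arches w).length = k :=
      hk ▸ (univIndex_eq_of_count_eq (isUniversal_length_arches w) hcount).symm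
    exact circIndex_eq_of_count_eq ((isUniversal_length_arches w).wpow s)
      (by rw [count_wpow, hcount])

theorem circIndex_pow_of_simple_arches [Fintype α] [DecidableEq α] (w : List α) (k : ℕ)
    (hk : univIndex w = k) (hk1 : 1 ≤ k)
    (harch : ∀ B ∈ arches w, ∀ a : α, B.count a = 1)
    (hrem : ∀ a : α, (rem w).count a ≤ 1) :
    ∀ s : ℕ, 1 ≤ s → circIndex (wpow w s) = s * k :=
  circIndex_pow_of_simple_arches_general w k hk harch
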